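/- arXiv:1809.04998 — 2 statements merged into one kernel-verified Lean document; each statement's English description precedes it below -/
import Mathlib

section
/- For closed subspaces E, F, G of a Hilbert space, the distance d(E,F) := sup over nonzero x in E of ‖x − P_F x‖/‖x‖ (where P_F is the orthogonal projection onto F) satisfies the triangle inequality d(E,G) ≤ d(E,F) + d(F,G). -/
/-- The distance `d(E,F) = sup_{x ∈ E, x ≠ 0} ‖x - P_F x‖ / ‖x‖` between two
(closed, i.e. complete) subspaces of a Hilbert space. -/
noncomputable def subDist {H : Type*} [NormedAddCommGroup H] [InnerProductSpace ℝ H]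
    (E F : Submodule ℝ H) [CompleteSpace F] : ℝ :=
  sSup ((fun x => ‖x - (F.subtypeL.comp (F.orthogonalProjection)) x‖ / ‖x‖) ''
    {x : H | x ∈ E ∧ x ≠ 0})

/-!
For `x ∈ E` let `y := P_F x ∈ F`. Since `P_G x` is the point of `G` nearest to `x`,
`‖x - P_G x‖ ≤ ‖x - P_G y‖ ≤ ‖x - y‖ + ‖y - P_G y‖ ≤ d(E,F) ‖x‖ + d(F,G) ‖y‖`,
and `‖y‖ ≤ ‖x‖` because `P_F` is a contraction.
-/

namespace Submodule

theorem norm_sub_starProjection_le {𝕜 H : Type*} [RCLike 𝕜] [NormedAddCommGroup H]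
    [InnerProductSpace 𝕜 H] (K : Submodule 𝕜 H) [K.HasOrthogonalProjection] (x : H)
    {z : H} (hz : z ∈ K) : ‖x - K.starProjection x‖ ≤ ‖x - z‖ := by
  rw [starProjection_minimal]
  exact ciInf_le ⟨0, by rintro _ ⟨w, rfl⟩; exact norm_nonneg _⟩ (⟨z, hz⟩ : K)

end Submodule

section subDist

variable {H : Type*} [NormedAddCommGroup H] [InnerProductSpace ℝ H]

theorem subDist_eq_sSup (E F : Submodule ℝ H) [CompleteSpace F] :
    subDist E F = sSup ((fun x => ‖x - F.starProjection x‖ / ‖x‖) '' {x | x ∈ E ∧ x ≠ 0}) :=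
  rfl

theorem subDist_nonneg (E F : Submodule ℝ H) [CompleteSpace F] : 0 ≤ subDist E F := by
  rw [subDist_eq_sSup]
  refine Real.sSup_nonneg ?_
  rintro _ ⟨x, -, rfl⟩
  positivity

theorem subDist_le_of_forall_norm_sub_le {E F : Submodule ℝ H} [CompleteSpace F] {c : ℝ}
    (hc : 0 ≤ c) (h : ∀ x ∈ E, ‖x - F.starProjection x‖ ≤ c * ‖x‖) : subDist E F ≤ c := by
  rw [subDist_eq_sSup]
  refine Real.sSup_le ?_ hc
  rintro _ ⟨x, ⟨hx, hx0⟩, rfl⟩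
  exact (div_le_iff₀ (norm_pos_iff.mpr hx0)).mpr (h x hx)

theorem norm_sub_starProjection_le_subDist_mul {E F : Submodule ℝ H} [CompleteSpace F]
    {x : H} (hx : x ∈ E) : ‖x - F.starProjection x‖ ≤ subDist E F * ‖x‖ := by
  rcases eq_or_ne x 0 with rfl | hx0
  · simp
  have hbdd : BddAbove ((fun x => ‖x - F.starProjection x‖ / ‖x‖) '' {x | x ∈ E ∧ x ≠ 0}) := by
    refine ⟨1, ?_⟩
    rintro _ ⟨z, -, rfl⟩
    exact div_le_one_of_le₀ (by simpa using F.norm_sub_starProjection_le z F.zero_mem)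
      (norm_nonneg z)
  have hratio : ‖x - F.starProjection x‖ / ‖x‖ ≤ subDist E F :=
    le_csSup hbdd ⟨x, ⟨hx, hx0⟩, rfl⟩
  exact (div_le_iff₀ (norm_pos_iff.mpr hx0)).mp hratio

end subDist

theorem stmt2_general {H : Type*} [NormedAddCommGroup H] [InnerProductSpace ℝ H]
    (E F G : Submodule ℝ H) [CompleteSpace F] [CompleteSpace G] :
    subDist E G ≤ subDist E F + subDist F G := by
  refine subDist_le_of_forall_norm_sub_le
    (add_nonneg (subDist_nonneg E F) (subDist_nonneg F G)) fun x hx => ?_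
  set y := F.starProjection x
  calc ‖x - G.starProjection x‖
      ≤ ‖x - G.starProjection y‖ := G.norm_sub_starProjection_le x (G.starProjection_apply_mem y)
    _ ≤ ‖x - y‖ + ‖y - G.starProjection y‖ := norm_sub_le_norm_sub_add_norm_sub x y _
    _ ≤ subDist E F * ‖x‖ + subDist F G * ‖y‖ :=
        add_le_add (norm_sub_starProjection_le_subDist_mul hx)
          (norm_sub_starProjection_le_subDist_mul (F.starProjection_apply_mem x))
    _ ≤ subDist E F * ‖x‖ + subDist F G * ‖x‖ := by
        gcongr
        exacts [subDist_nonneg F G, F.norm_starProjection_apply_le x]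
    _ = (subDist E F + subDist F G) * ‖x‖ := (add_mul _ _ _).symm

/-- The triangle inequality `d(E,G) ≤ d(E,F) + d(F,G)` for the distance between
closed subspaces of a Hilbert space. -/
theorem stmt2 {H : Type*} [NormedAddCommGroup H] [InnerProductSpace ℝ H] [CompleteSpace H]
    (E F G : Submodule ℝ H) [CompleteSpace E] [CompleteSpace F] [CompleteSpace G] :
    subDist E G ≤ subDist E F + subDist F G :=
  stmt2_general E F G
end

section
/- For δ > 0, α > 0, let L_D be the Laplacian on (0,δ) with Robin condition −u'(0) = αu(0) at 0 and Dirichlet condition u(δ) = 0. Then as αδ → +∞, the first eigenvalue satisfies E₁(L_D) = −α²(1 + O(e^{−δα})), and the second eigenvalue satisfies E₂(L_D) ≥ 0. -/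
/-!
Integrating `(f²)' = 2 f f'` from the Robin end to the Dirichlet end and using
`-2α f f' ≤ f'² + α² f²` gives `α f(0)² ≤ ∫ f'² + α² ∫ f²`, so every Rayleigh quotient, hence
`E₁`, is at least `-α²`. Conversely the trial function `sinh (α (δ - t))` has Rayleigh quotient
`-α² + 2α² sinh(αδ) e^{-αδ} / (sinh(αδ) cosh(αδ) - αδ) = -α² + O(α² e^{-αδ})`. Finally, every
two-dimensional trial space contains a nonzero function vanishing at `0`, where the form is
nonnegative, so `E₂ ≥ 0`.
-/

open MeasureTheory

/-- `n`-th min-max value (eigenvalue) of the Laplacian on `(0,δ)` with `α`-Robin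
condition at `0` and Dirichlet condition at `δ`, defined via the quadratic form
`f ↦ ∫₀^δ (f')² − α f(0)²` on the (dense subspace of `C¹` functions of the) form
domain `{f ∈ H¹(0,δ) : f(δ) = 0}`. -/
noncomputable def LDev (δ α : ℝ) (n : ℕ) : ℝ :=
  sInf {v : ℝ | ∃ G : Submodule ℝ (ℝ → ℝ),
    (∀ f ∈ G, ContDiff ℝ 1 f ∧ f δ = 0) ∧ Module.finrank ℝ ↥G = n ∧
    v = sSup ((fun f : ℝ → ℝ =>
        ((∫ t in Set.Ioo (0:ℝ) δ, (deriv f t) ^ 2) - α * (f 0) ^ 2) /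
          (∫ t in Set.Ioo (0:ℝ) δ, (f t) ^ 2)) '' {f | f ∈ G ∧ f ≠ 0})}

open Real

lemma Real.le_sSup_of_nonpos_of_forall_le {s : Set ℝ} {c : ℝ} (hc : c ≤ 0)
    (h : ∀ y ∈ s, c ≤ y) : c ≤ sSup s := by
  rcases s.eq_empty_or_nonempty with rfl | ⟨y, hy⟩
  · simpa using hc
  by_cases hbdd : BddAbove s
  · exact (h y hy).trans (le_csSup hbdd hy)
  · rwa [Real.sSup_of_not_bddAbove hbdd]

lemma Submodule.exists_ne_zero_apply_eq_zero {X K : Type*} [Field K]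
    (G : Submodule K (X → K)) [FiniteDimensional K G] (hG : 1 < Module.finrank K G) (x : X) :
    ∃ f ∈ G, f ≠ 0 ∧ f x = 0 := by
  let eval : G →ₗ[K] K := (LinearMap.proj x).comp G.subtype
  have hker : LinearMap.ker eval ≠ ⊥ :=
    LinearMap.ker_ne_bot_of_finrank_lt (by rwa [Module.finrank_self])
  obtain ⟨g, hg, hg0⟩ := (Submodule.ne_bot_iff _).mp hker
  exact ⟨g, g.2, by simpa using hg0, hg⟩

lemma setIntegral_Ioo_eq_intervalIntegral {a b : ℝ} (hab : a ≤ b) (g : ℝ → ℝ) :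
    ∫ t in Set.Ioo a b, g t = ∫ t in a..b, g t := by
  rw [intervalIntegral.integral_of_le hab, integral_Ioc_eq_integral_Ioo]

lemma mul_sq_le_integral_deriv_sq_add {f : ℝ → ℝ} (hf : ContDiff ℝ 1 f) {a b : ℝ} (hab : a ≤ b)
    (hfb : f b = 0) (α : ℝ) :
    α * f a ^ 2 ≤ (∫ t in a..b, deriv f t ^ 2) + α ^ 2 * ∫ t in a..b, f t ^ 2 := by
  have hf' : Continuous (deriv f) := hf.continuous_deriv le_rfl
  have hfc : Continuous f := hf.continuous
  have hftc : ∫ t in a..b, 2 * f t * deriv f t = f b ^ 2 - f a ^ 2 :=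
    intervalIntegral.integral_eq_sub_of_hasDerivAt
      (fun t _ ↦ by simpa using (hf.differentiable one_ne_zero t).hasDerivAt.pow 2)
      (Continuous.intervalIntegrable (by fun_prop) _ _)
  calc α * f a ^ 2 = ∫ t in a..b, -α * (2 * f t * deriv f t) := by
        rw [intervalIntegral.integral_const_mul, hftc, hfb]; ring
    _ ≤ ∫ t in a..b, (deriv f t ^ 2 + α ^ 2 * f t ^ 2) :=
        intervalIntegral.integral_mono_on hab (Continuous.intervalIntegrable (by fun_prop) _ _)
          (Continuous.intervalIntegrable (by fun_prop) _ _)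
          fun t _ ↦ by nlinarith [sq_nonneg (deriv f t + α * f t)]
    _ = _ := by
        rw [intervalIntegral.integral_add (Continuous.intervalIntegrable (by fun_prop) _ _)
          (Continuous.intervalIntegrable (by fun_prop) _ _), intervalIntegral.integral_const_mul]

noncomputable def rayleighQuotient (δ α : ℝ) (f : ℝ → ℝ) : ℝ :=
  ((∫ t in Set.Ioo (0:ℝ) δ, deriv f t ^ 2) - α * f 0 ^ 2) / ∫ t in Set.Ioo (0:ℝ) δ, f t ^ 2

noncomputable def minMaxValues (δ α : ℝ) (n : ℕ) : Set ℝ :=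
  {v | ∃ G : Submodule ℝ (ℝ → ℝ), (∀ f ∈ G, ContDiff ℝ 1 f ∧ f δ = 0) ∧
    Module.finrank ℝ G = n ∧ v = sSup (rayleighQuotient δ α '' {f | f ∈ G ∧ f ≠ 0})}

theorem LDev_eq_sInf_minMaxValues (δ α : ℝ) (n : ℕ) :
    LDev δ α n = sInf (minMaxValues δ α n) :=
  rfl

section RayleighQuotient

variable {δ α : ℝ} {f : ℝ → ℝ}

lemma neg_sq_le_rayleighQuotient (hδ : 0 ≤ δ) (hf : ContDiff ℝ 1 f) (hfδ : f δ = 0) :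
    -α ^ 2 ≤ rayleighQuotient δ α f := by
  have hbound := mul_sq_le_integral_deriv_sq_add hf hδ hfδ α
  rw [← setIntegral_Ioo_eq_intervalIntegral hδ, ← setIntegral_Ioo_eq_intervalIntegral hδ] at hbound
  rcases (integral_nonneg fun t ↦ sq_nonneg (f t) :
      0 ≤ ∫ t in Set.Ioo (0:ℝ) δ, f t ^ 2).eq_or_lt with hzero | hpos
  · simp only [rayleighQuotient, ← hzero, div_zero, Left.neg_nonpos_iff]
    positivity
  · rw [rayleighQuotient, le_div_iff₀ hpos]
    linarith

lemma rayleighQuotient_nonneg_of_apply_zero (hf0 : f 0 = 0) : 0 ≤ rayleighQuotient δ α f := by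
  rw [rayleighQuotient, hf0]
  exact div_nonneg (by simpa using integral_nonneg fun t ↦ sq_nonneg (deriv f t))
    (integral_nonneg fun t ↦ sq_nonneg (f t))

lemma rayleighQuotient_smul {c : ℝ} (hc : c ≠ 0) (f : ℝ → ℝ) :
    rayleighQuotient δ α (c • f) = rayleighQuotient δ α f := by
  have hcf : c • f = fun t ↦ c * f t := rfl
  simp only [rayleighQuotient, hcf, deriv_const_mul_field', mul_pow, integral_const_mul]
  rw [← mul_assoc, mul_comm α, mul_assoc, ← mul_sub]
  exact mul_div_mul_left _ _ (pow_ne_zero 2 hc)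

lemma neg_sq_le_of_mem_minMaxValues {n : ℕ} {v : ℝ} (hδ : 0 ≤ δ) (hv : v ∈ minMaxValues δ α n) :
    -α ^ 2 ≤ v := by
  obtain ⟨G, hG, -, rfl⟩ := hv
  refine Real.le_sSup_of_nonpos_of_forall_le (by simpa using sq_nonneg α) ?_
  rintro _ ⟨f, ⟨hfG, -⟩, rfl⟩
  exact neg_sq_le_rayleighQuotient hδ (hG f hfG).1 (hG f hfG).2

lemma nonneg_of_mem_minMaxValues_two {v : ℝ} (hv : v ∈ minMaxValues δ α 2) : 0 ≤ v := by
  obtain ⟨G, -, hG, rfl⟩ := hv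
  have : FiniteDimensional ℝ G := Module.finite_of_finrank_pos (by omega)
  obtain ⟨f, hfG, hf, hf0⟩ := G.exists_ne_zero_apply_eq_zero (by omega) 0
  exact Real.sSup_nonneg' ⟨_, ⟨f, ⟨hfG, hf⟩, rfl⟩, rayleighQuotient_nonneg_of_apply_zero hf0⟩

lemma rayleighQuotient_mem_minMaxValues_one (hf : ContDiff ℝ 1 f) (hfδ : f δ = 0) (hf0 : f ≠ 0) :
    rayleighQuotient δ α f ∈ minMaxValues δ α 1 := by
  refine ⟨Submodule.span ℝ {f}, ?_, finrank_span_singleton hf0, ?_⟩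
  · intro g hg
    obtain ⟨c, rfl⟩ := Submodule.mem_span_singleton.mp hg
    exact ⟨hf.const_smul c, by simp [hfδ]⟩
  · suffices rayleighQuotient δ α '' {g | g ∈ Submodule.span ℝ {f} ∧ g ≠ 0} =
        {rayleighQuotient δ α f} by rw [this, csSup_singleton]
    refine Set.eq_singleton_iff_unique_mem.mpr
      ⟨⟨f, ⟨Submodule.mem_span_singleton_self f, hf0⟩, rfl⟩, ?_⟩
    rintro _ ⟨g, ⟨hg, hg0⟩, rfl⟩
    obtain ⟨c, rfl⟩ := Submodule.mem_span_singleton.mp hg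
    exact rayleighQuotient_smul (by rintro rfl; simp at hg0) f

end RayleighQuotient

section Eigenvalues

variable {δ α : ℝ} {f : ℝ → ℝ}

lemma LDev_one_le_rayleighQuotient (hδ : 0 ≤ δ) (hf : ContDiff ℝ 1 f) (hfδ : f δ = 0)
    (hf0 : f ≠ 0) : LDev δ α 1 ≤ rayleighQuotient δ α f := by
  rw [LDev_eq_sInf_minMaxValues]
  exact csInf_le ⟨-α ^ 2, fun _ hv ↦ neg_sq_le_of_mem_minMaxValues hδ hv⟩
    (rayleighQuotient_mem_minMaxValues_one hf hfδ hf0)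

lemma neg_sq_le_LDev_one (hδ : 0 ≤ δ) (hf : ContDiff ℝ 1 f) (hfδ : f δ = 0) (hf0 : f ≠ 0) :
    -α ^ 2 ≤ LDev δ α 1 := by
  rw [LDev_eq_sInf_minMaxValues]
  exact le_csInf ⟨_, rayleighQuotient_mem_minMaxValues_one hf hfδ hf0⟩
    fun _ hv ↦ neg_sq_le_of_mem_minMaxValues hδ hv

lemma LDev_two_nonneg (δ α : ℝ) : 0 ≤ LDev δ α 2 := by
  rw [LDev_eq_sInf_minMaxValues]
  exact Real.sInf_nonneg fun _ hv ↦ nonneg_of_mem_minMaxValues_two hv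

end Eigenvalues

lemma integral_sinh_sq (a b : ℝ) :
    ∫ x in a..b, sinh x ^ 2 = (sinh b * cosh b - b - (sinh a * cosh a - a)) / 2 := by
  rw [intervalIntegral.integral_eq_sub_of_hasDerivAt (f := fun x ↦ (sinh x * cosh x - x) / 2)
    (fun x _ ↦ ?_) (Continuous.intervalIntegrable (by fun_prop) _ _)]
  · ring
  exact ((((hasDerivAt_sinh x).mul (hasDerivAt_cosh x)).sub (hasDerivAt_id x)).div_const 2
    ).congr_deriv (by linear_combination cosh_sq x / 2)

lemma integral_cosh_sq (a b : ℝ) :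
    ∫ x in a..b, cosh x ^ 2 = (sinh b * cosh b + b - (sinh a * cosh a + a)) / 2 := by
  rw [intervalIntegral.integral_eq_sub_of_hasDerivAt (f := fun x ↦ (sinh x * cosh x + x) / 2)
    (fun x _ ↦ ?_) (Continuous.intervalIntegrable (by fun_prop) _ _)]
  · ring
  exact ((((hasDerivAt_sinh x).mul (hasDerivAt_cosh x)).add (hasDerivAt_id x)).div_const 2
    ).congr_deriv (by linear_combination -cosh_sq x / 2)

lemma sinh_le_sinh_mul_cosh_sub_self {x : ℝ} (hx : 3 ≤ x) : sinh x ≤ sinh x * cosh x - x := by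
  have hsinh : x ≤ sinh x := self_le_sinh_iff.mpr (by linarith)
  have hcosh : 2 ≤ cosh x := by
    rw [cosh_eq]
    linarith [add_one_le_exp x, exp_pos (-x)]
  nlinarith

/-- The decaying solution `e^{-αt}` of the Robin problem on the half-line, corrected to vanish
at `δ`. -/
noncomputable def quasimode (δ α t : ℝ) : ℝ := sinh (α * (δ - t))

section Quasimode

variable {δ α : ℝ}

lemma hasDerivAt_quasimode (δ α t : ℝ) :
    HasDerivAt (quasimode δ α) (-(α * cosh (α * (δ - t)))) t :=
  ((hasDerivAt_sinh _).comp t (((hasDerivAt_id t).const_sub δ).const_mul α)).congr_deriv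
    (by simp [mul_sub, mul_comm])

lemma contDiff_quasimode (δ α : ℝ) : ContDiff ℝ 1 (quasimode δ α) := by
  unfold quasimode; fun_prop

lemma quasimode_self (δ α : ℝ) : quasimode δ α δ = 0 := by
  simp [quasimode]

lemma quasimode_ne_zero (hα : 0 < α) (hδ : 0 < δ) : quasimode δ α ≠ 0 := by
  intro h
  have := congr_fun h 0
  simp only [quasimode, sub_zero, Pi.zero_apply, sinh_eq_zero] at this
  exact (mul_pos hα hδ).ne' this

lemma integral_quasimode_sq (hα : α ≠ 0) :
    ∫ t in (0:ℝ)..δ, quasimode δ α t ^ 2 =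
      (sinh (α * δ) * cosh (α * δ) - α * δ) / (2 * α) := by
  simp only [quasimode, mul_sub]
  rw [intervalIntegral.integral_comp_sub_mul (fun x ↦ sinh x ^ 2) hα, integral_sinh_sq]
  simp only [mul_zero, sub_zero, sub_self, sinh_zero, cosh_zero, mul_one, smul_eq_mul]
  field_simp

lemma integral_deriv_quasimode_sq (hα : α ≠ 0) :
    ∫ t in (0:ℝ)..δ, deriv (quasimode δ α) t ^ 2 =
      α * (sinh (α * δ) * cosh (α * δ) + α * δ) / 2 := by
  simp only [fun t ↦ (hasDerivAt_quasimode δ α t).deriv, neg_sq, mul_pow, mul_sub]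
  rw [intervalIntegral.integral_const_mul,
    intervalIntegral.integral_comp_sub_mul (fun x ↦ cosh x ^ 2) hα, integral_cosh_sq]
  simp only [mul_zero, sub_zero, sub_self, sinh_zero, cosh_zero, mul_one, add_zero, smul_eq_mul]
  field_simp


lemma rayleighQuotient_quasimode_add_sq (hα : 0 < α) (hδ : 0 < δ) :
    rayleighQuotient δ α (quasimode δ α) + α ^ 2 =
      2 * α ^ 2 * sinh (α * δ) * exp (-(α * δ)) / (sinh (α * δ) * cosh (α * δ) - α * δ) := by
  have hden : 0 < sinh (α * δ) * cosh (α * δ) - α * δ := by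
    have hαδ := mul_pos hα hδ
    have := mul_le_mul_of_nonneg_left (one_le_cosh (α * δ)) (sinh_pos_iff.mpr hαδ).le
    linarith [self_lt_sinh_iff.mpr hαδ]
  rw [rayleighQuotient, setIntegral_Ioo_eq_intervalIntegral hδ.le,
    setIntegral_Ioo_eq_intervalIntegral hδ.le, integral_deriv_quasimode_sq hα.ne',
    integral_quasimode_sq hα.ne', ← cosh_sub_sinh, quasimode, sub_zero]
  field_simp
  ring

lemma rayleighQuotient_quasimode_add_sq_le (hα : 0 < α) (hδ : 0 < δ) (hαδ : 3 ≤ α * δ) :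
    rayleighQuotient δ α (quasimode δ α) + α ^ 2 ≤ 2 * α ^ 2 * exp (-(α * δ)) := by
  have hsinh := sinh_le_sinh_mul_cosh_sub_self hαδ
  have hden := (sinh_pos_iff.mpr (by linarith)).trans_le hsinh
  rw [rayleighQuotient_quasimode_add_sq hα hδ, div_le_iff₀ hden, mul_right_comm _ (sinh _)]
  exact mul_le_mul_of_nonneg_left hsinh (by positivity)

end Quasimode

/-- For the Robin–Dirichlet Laplacian `L_D` on `(0,δ)`, as `αδ → +∞` one has
`E₁(L_D) = −α²(1 + O(e^{−δα}))` and `E₂(L_D) ≥ 0`. -/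
theorem stmt7 :
    ∃ C M : ℝ, 0 < C ∧ ∀ δ α : ℝ, 0 < δ → 0 < α → M ≤ α * δ →
      |LDev δ α 1 + α ^ 2| ≤ C * α ^ 2 * Real.exp (-(δ * α)) ∧
      0 ≤ LDev δ α 2 := by
  refine ⟨2, 3, two_pos, fun δ α hδ hα hαδ ↦ ⟨?_, LDev_two_nonneg δ α⟩⟩
  have hlower := neg_sq_le_LDev_one (α := α) hδ.le (contDiff_quasimode δ α) (quasimode_self δ α)
    (quasimode_ne_zero hα hδ)
  have hupper := LDev_one_le_rayleighQuotient (α := α) hδ.le (contDiff_quasimode δ α)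
    (quasimode_self δ α) (quasimode_ne_zero hα hδ)
  have hquasimode := rayleighQuotient_quasimode_add_sq_le hα hδ hαδ
  rw [abs_of_nonneg (by linarith), mul_comm δ α]
  linarith
end
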